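/- arXiv:1905.02383 — 2 statements merged into one kernel-verified Lean document; each statement's English description precedes it below -/
import Mathlib

section
/- For any μ, μ' ≥ 0 and all α ∈ [0,1], G_μ(1 − G_{μ'}(α)) = G_{μ+μ'}(α), where G_μ(α) = Φ(Φ⁻¹(1−α) − μ). -/
open MeasureTheory ProbabilityTheory Set

noncomputable def stdNormCDF (x : ℝ) : ℝ := cdf (gaussianReal 0 1) x

noncomputable def stdNormCDFInv (p : ℝ) : ℝ := sInf {x : ℝ | p ≤ stdNormCDF x}

noncomputable def Gmu (μ α : ℝ) : ℝ :=
  if α ≤ 0 then 1 else if 1 ≤ α then 0 else stdNormCDF (stdNormCDFInv (1 - α) - μ)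

lemma gauss_pos_of_vol_pos {s : Set ℝ} (hs : volume s ≠ 0) : 0 < gaussianReal 0 1 s := by
  rw [pos_iff_ne_zero]
  intro h
  exact hs (gaussianReal_absolutelyContinuous' 0 one_ne_zero h)

lemma stdNormCDF_pos (x : ℝ) : 0 < stdNormCDF x := by
  rw [stdNormCDF, cdf_eq_real, measureReal_def]
  refine ENNReal.toReal_pos ?_ (measure_ne_top _ _)
  exact (gauss_pos_of_vol_pos (by simp)).ne'

lemma stdNormCDF_lt_one (x : ℝ) : stdNormCDF x < 1 := by
  rw [stdNormCDF, cdf_eq_real, measureReal_def]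
  have h1 : gaussianReal 0 1 (Iic x) + gaussianReal 0 1 (Ioi x) = 1 := by
    rw [← measure_union (Iic_disjoint_Ioi le_rfl) measurableSet_Ioi, Iic_union_Ioi,
      measure_univ]
  have h2 : 0 < gaussianReal 0 1 (Ioi x) := gauss_pos_of_vol_pos (by simp)
  have h3 : gaussianReal 0 1 (Iic x) < 1 := by
    rw [← h1]
    exact ENNReal.lt_add_right (measure_ne_top _ _) h2.ne'
  rw [← ENNReal.toReal_one]
  exact ENNReal.toReal_lt_toReal (measure_ne_top _ _) ENNReal.one_ne_top |>.mpr h3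

lemma stdNormCDF_strictMono : StrictMono stdNormCDF := by
  intro a b hab
  rw [stdNormCDF, stdNormCDF, cdf_eq_real, cdf_eq_real, measureReal_def, measureReal_def]
  refine ENNReal.toReal_strict_mono (measure_ne_top _ _) ?_
  have : gaussianReal 0 1 (Iic b) = gaussianReal 0 1 (Iic a) + gaussianReal 0 1 (Ioc a b) := by
    rw [← measure_union (Iic_disjoint_Ioc le_rfl) measurableSet_Ioc, Iic_union_Ioc_eq_Iic hab.le]
  rw [this]
  exact ENNReal.lt_add_right (measure_ne_top _ _)
    (gauss_pos_of_vol_pos (by simp [hab])).ne'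

lemma stdNormCDFInv_cdf (x : ℝ) : stdNormCDFInv (stdNormCDF x) = x := by
  rw [stdNormCDFInv]
  have : {y : ℝ | stdNormCDF x ≤ stdNormCDF y} = Ici x := by
    ext y
    simp [stdNormCDF_strictMono.le_iff_le]
  rw [this, csInf_Ici]

/-- For `μ, μ' ≥ 0` and all `α ∈ [0,1]`, `G_μ(1 - G_{μ'}(α)) = G_{μ+μ'}(α)`. -/
theorem statement15 (μ μ' : ℝ) (hμ : 0 ≤ μ) (hμ' : 0 ≤ μ') :
    ∀ α ∈ Icc (0:ℝ) 1, Gmu μ (1 - Gmu μ' α) = Gmu (μ + μ') α := by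
  rintro α ⟨h0, h1⟩
  rcases eq_or_lt_of_le h0 with h0 | h0
  · simp [Gmu, ← h0]
  rcases eq_or_lt_of_le h1 with h1 | h1
  · simp [Gmu, h1, not_le.mpr (zero_lt_one)]
  have hG : Gmu μ' α = stdNormCDF (stdNormCDFInv (1 - α) - μ') := by
    rw [Gmu, if_neg (not_le.mpr h0), if_neg (not_le.mpr h1)]
  have hpos := stdNormCDF_pos (stdNormCDFInv (1 - α) - μ')
  have hlt := stdNormCDF_lt_one (stdNormCDFInv (1 - α) - μ')
  rw [hG, Gmu, if_neg (by linarith), if_neg (by linarith),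
    Gmu, if_neg (not_le.mpr h0), if_neg (not_le.mpr h1)]
  rw [show (1 : ℝ) - (1 - stdNormCDF (stdNormCDFInv (1 - α) - μ')) =
    stdNormCDF (stdNormCDFInv (1 - α) - μ') by ring, stdNormCDFInv_cdf]
  ring_nf
end

section
/- For any trade-off function f and δ₁, δ₂ ∈ [0,1], the tensor product satisfies f ⊗ f_{0,δ}(α) = (1−δ)·f(α/(1−δ)) for 0 ≤ α ≤ 1−δ and 0 for 1−δ ≤ α ≤ 1. Consequently, f_{0,δ₁} ⊗ f_{0,δ₂} = f_{0, 1−(1−δ₁)(1−δ₂)}. -/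
open MeasureTheory ProbabilityTheory Set

noncomputable def tradeoff {Ω : Type*} [MeasurableSpace Ω] (P Q : Measure Ω) (α : ℝ) : ℝ :=
  sInf { β : ℝ | ∃ φ : Ω → ℝ, Measurable φ ∧ (∀ ω, φ ω ∈ Icc (0:ℝ) 1) ∧
    (∫ ω, φ ω ∂P) ≤ α ∧ β = 1 - ∫ ω, φ ω ∂Q }

noncomputable def unif (a : ℝ) : Measure ℝ := (volume : Measure ℝ).restrict (Icc a (a + 1))

instance unif_prob (a : ℝ) : IsProbabilityMeasure (unif a) := by
  constructor
  rw [unif, Measure.restrict_apply_univ, Real.volume_Icc]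
  norm_num

lemma integrable_of_bdd {Ω : Type*} [MeasurableSpace Ω] {μ : Measure Ω} [IsFiniteMeasure μ]
    {ψ : Ω → ℝ} (hm : Measurable ψ) (hb : ∀ ω, ψ ω ∈ Icc (0:ℝ) 1) : Integrable ψ μ :=
  ⟨hm.aestronglyMeasurable, HasFiniteIntegral.of_bounded (C := 1) (ae_of_all _ fun ω => by
    rw [Real.norm_eq_abs, abs_le]; exact ⟨by linarith [(hb ω).1], (hb ω).2⟩)⟩

lemma integral_le_one {Ω : Type*} [MeasurableSpace Ω] {μ : Measure Ω} [IsProbabilityMeasure μ]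
    {ψ : Ω → ℝ} (hm : Measurable ψ) (hb : ∀ ω, ψ ω ∈ Icc (0:ℝ) 1) :
    (∫ ω, ψ ω ∂μ) ≤ 1 := by
  calc (∫ ω, ψ ω ∂μ) ≤ ∫ _ω, (1:ℝ) ∂μ :=
        integral_mono (integrable_of_bdd hm hb) (integrable_const 1) (fun ω => (hb ω).2)
    _ = 1 := by simp

lemma integral_nonneg' {Ω : Type*} [MeasurableSpace Ω] {μ : Measure Ω}
    {ψ : Ω → ℝ} (hb : ∀ ω, ψ ω ∈ Icc (0:ℝ) 1) : 0 ≤ ∫ ω, ψ ω ∂μ :=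
  integral_nonneg fun ω => (hb ω).1

section TradeoffBasic

variable {Ω : Type*} [MeasurableSpace Ω] {P Q : Measure Ω}

lemma tradeoff_bddBelow [IsProbabilityMeasure Q] (α : ℝ) :
    BddBelow { β : ℝ | ∃ φ : Ω → ℝ, Measurable φ ∧ (∀ ω, φ ω ∈ Icc (0:ℝ) 1) ∧
      (∫ ω, φ ω ∂P) ≤ α ∧ β = 1 - ∫ ω, φ ω ∂Q } := by
  refine ⟨0, fun β hβ => ?_⟩
  obtain ⟨φ, hm, hb, _, rfl⟩ := hβ
  linarith [integral_le_one (μ := Q) hm hb]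

lemma tradeoff_le [IsProbabilityMeasure Q] {α : ℝ} {φ : Ω → ℝ} (hm : Measurable φ)
    (hb : ∀ ω, φ ω ∈ Icc (0:ℝ) 1) (hP : (∫ ω, φ ω ∂P) ≤ α) :
    tradeoff P Q α ≤ 1 - ∫ ω, φ ω ∂Q :=
  csInf_le (tradeoff_bddBelow α) ⟨φ, hm, hb, hP, rfl⟩

lemma le_tradeoff {α c : ℝ} (hα : 0 ≤ α)
    (h : ∀ φ : Ω → ℝ, Measurable φ → (∀ ω, φ ω ∈ Icc (0:ℝ) 1) →
      (∫ ω, φ ω ∂P) ≤ α → c ≤ 1 - ∫ ω, φ ω ∂Q) :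
    c ≤ tradeoff P Q α := by
  refine le_csInf ⟨1, (fun _ => 0), measurable_const, fun ω => ⟨le_refl _, zero_le_one⟩, by
    simpa using hα, by simp⟩ ?_
  rintro β ⟨φ, hm, hb, hP, rfl⟩
  exact h φ hm hb hP

lemma tradeoff_nonneg [IsProbabilityMeasure Q] {α : ℝ} (hα : 0 ≤ α) :
    0 ≤ tradeoff P Q α :=
  le_tradeoff hα fun φ hm hb _ => by linarith [integral_le_one (μ := Q) hm hb]

end TradeoffBasic

lemma restrict_Icc_finite (a b : ℝ) :
    IsFiniteMeasure ((volume : Measure ℝ).restrict (Icc a b)) :=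
  ⟨by rw [Measure.restrict_apply_univ]; exact measure_Icc_lt_top⟩

lemma Ici_inter_Icc' (a b c : ℝ) : Ici a ∩ Icc b c = Icc (max a b) c := by
  ext x; simp [mem_Icc, max_le_iff, and_assoc]

lemma indicator_mem_Icc (s : Set ℝ) (x : ℝ) : s.indicator (fun _ => (1:ℝ)) x ∈ Icc (0:ℝ) 1 := by
  by_cases h : x ∈ s <;> simp [Set.indicator_apply, h]

lemma integral_indicator_unif (a : ℝ) {s : Set ℝ} (hs : MeasurableSet s) :
    ∫ x, s.indicator (fun _ => (1:ℝ)) x ∂(unif a) = (volume (s ∩ Icc a (a+1))).toReal := by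
  have : (fun x => s.indicator (fun _ => (1:ℝ)) x) = s.indicator (1 : ℝ → ℝ) := rfl
  rw [this, unif, integral_indicator_one hs, measureReal_def, Measure.restrict_apply hs]

lemma integrableOn_of_bdd {φ : ℝ → ℝ} (hm : Measurable φ) (hb : ∀ x, φ x ∈ Icc (0:ℝ) 1)
    {s : Set ℝ} (hs : volume s < ⊤) : IntegrableOn φ s volume := by
  haveI : IsFiniteMeasure ((volume : Measure ℝ).restrict s) :=
    ⟨by rwa [Measure.restrict_apply_univ]⟩
  exact integrable_of_bdd hm hb

lemma setIntegral_le_vol {φ : ℝ → ℝ} (hm : Measurable φ) (hb : ∀ x, φ x ∈ Icc (0:ℝ) 1)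
    {s : Set ℝ} (hs : volume s < ⊤) :
    (∫ x in s, φ x) ≤ (volume s).toReal := by
  haveI : IsFiniteMeasure ((volume : Measure ℝ).restrict s) :=
    ⟨by rwa [Measure.restrict_apply_univ]⟩
  calc (∫ x in s, φ x) ≤ ∫ _x in s, (1:ℝ) :=
        integral_mono (integrable_of_bdd hm hb) (integrable_const 1) (fun x => (hb x).2)
    _ = (volume s).toReal := by
        rw [setIntegral_const, smul_eq_mul, mul_one, measureReal_def]

/-- key: `∫ x in Icc δ 1, φ + δ` dominates the integral over `unif δ`. -/
lemma integral_unif_split {φ : ℝ → ℝ} (hm : Measurable φ) (hb : ∀ x, φ x ∈ Icc (0:ℝ) 1)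
    {δ : ℝ} (hδ : δ ∈ Icc (0:ℝ) 1) :
    (∫ x, φ x ∂(unif δ)) ≤ (∫ x in Icc δ 1, φ x) + δ := by
  have hsplit : Icc δ (δ+1) = Icc δ 1 ∪ Ioc 1 (δ+1) :=
    (Icc_union_Ioc_eq_Icc hδ.2 (by linarith [hδ.1])).symm
  have hdisj : Disjoint (Icc δ (1:ℝ)) (Ioc 1 (δ+1)) :=
    (Iic_disjoint_Ioc (le_refl (1:ℝ))).mono Icc_subset_Iic_self le_rfl
  have h1 : IntegrableOn φ (Icc δ 1) volume :=
    integrableOn_of_bdd hm hb (by rw [Real.volume_Icc]; exact ENNReal.ofReal_lt_top)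
  have h2 : IntegrableOn φ (Ioc 1 (δ+1)) volume :=
    integrableOn_of_bdd hm hb (by rw [Real.volume_Ioc]; exact ENNReal.ofReal_lt_top)
  have : (∫ x, φ x ∂(unif δ)) = (∫ x in Icc δ 1, φ x) + ∫ x in Ioc 1 (δ+1), φ x := by
    rw [unif, hsplit, setIntegral_union hdisj measurableSet_Ioc h1 h2]
  rw [this]
  have hle : (∫ x in Ioc 1 (δ+1), φ x) ≤ δ := by
    calc (∫ x in Ioc 1 (δ+1), φ x) ≤ (volume (Ioc 1 (δ+1))).toReal :=
          setIntegral_le_vol hm hb (by rw [Real.volume_Ioc]; exact ENNReal.ofReal_lt_top)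
      _ = δ := by rw [Real.volume_Ioc, ENNReal.toReal_ofReal (by linarith [hδ.1])]; ring
  linarith

lemma integral_Icc_le_unif_zero {φ : ℝ → ℝ} (hm : Measurable φ) (hb : ∀ x, φ x ∈ Icc (0:ℝ) 1)
    {δ : ℝ} (hδ : δ ∈ Icc (0:ℝ) 1) :
    (∫ x in Icc δ 1, φ x) ≤ ∫ x, φ x ∂(unif 0) := by
  have h0 : IntegrableOn φ (Icc (0:ℝ) 1) volume :=
    integrableOn_of_bdd hm hb (by rw [Real.volume_Icc]; exact ENNReal.ofReal_lt_top)
  have : (∫ x, φ x ∂(unif 0)) = ∫ x in Icc (0:ℝ) 1, φ x := by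
    rw [unif]; norm_num
  rw [this]
  exact setIntegral_mono_set h0 (ae_of_all _ fun x => (hb x).1)
    (HasSubset.Subset.eventuallyLE (Icc_subset_Icc_left hδ.1))

lemma tradeoff_unif {δ : ℝ} (hδ : δ ∈ Icc (0:ℝ) 1) {α : ℝ} (hα : α ∈ Icc (0:ℝ) 1) :
    tradeoff (unif 0) (unif δ) α = max 0 (1 - δ - α) := by
  apply le_antisymm
  · -- upper bound via the test `1_{x ≥ 1-α}`
    set φ : ℝ → ℝ := (Ici (1-α)).indicator (fun _ => (1:ℝ)) with hφ
    have hm : Measurable φ := (measurable_indicator_const_iff 1).mpr measurableSet_Ici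
    have hb : ∀ x, φ x ∈ Icc (0:ℝ) 1 := indicator_mem_Icc _
    have hP : (∫ x, φ x ∂(unif 0)) = α := by
      rw [hφ, integral_indicator_unif 0 measurableSet_Ici, Ici_inter_Icc']
      rw [max_eq_left (by linarith [hα.2]), Real.volume_Icc]
      rw [ENNReal.toReal_ofReal (by linarith [hα.1])]; ring_nf
    have hQ : (∫ x, φ x ∂(unif δ)) = min 1 (α + δ) := by
      rw [hφ, integral_indicator_unif δ measurableSet_Ici, Ici_inter_Icc', Real.volume_Icc,
        ENNReal.toReal_ofReal (by rcases le_total (1-α) δ with h | h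
                                  · rw [max_eq_right h]; linarith
                                  · rw [max_eq_left h]; linarith [hα.1, hδ.1])]
      rcases le_total (1-α) δ with h | h
      · rw [max_eq_right h, min_eq_left (by linarith)]; ring
      · rw [max_eq_left h, min_eq_right (by linarith)]; ring
    refine le_trans (tradeoff_le (P := unif 0) (Q := unif δ) hm hb (le_of_eq hP)) ?_
    rw [hQ]
    rcases le_total (1:ℝ) (α + δ) with h | h
    · rw [min_eq_left h]; simp
    · rw [min_eq_right h, max_eq_right (by linarith)]; linarith
  · -- lower bound
    refine le_tradeoff hα.1 fun φ hm hb hP => ?_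
    have h1 := integral_unif_split hm hb hδ
    have h2 := integral_Icc_le_unif_zero hm hb hδ
    have h3 := integral_le_one (μ := unif δ) hm hb
    have : (∫ x, φ x ∂(unif δ)) ≤ α + δ := by linarith
    rcases le_total (0:ℝ) (1 - δ - α) with h | h
    · rw [max_eq_right h]; linarith
    · rw [max_eq_left h]; linarith

section Main

variable {Ω : Type*} [MeasurableSpace Ω] (P Q : Measure Ω)
  [IsProbabilityMeasure P] [IsProbabilityMeasure Q]

lemma integral_snd_prod (ν : Measure ℝ) [SFinite ν] (g : ℝ → ℝ) :
    ∫ p : Ω × ℝ, g p.2 ∂(P.prod ν) = ∫ x, g x ∂ν := by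
  have h : (fun p : Ω × ℝ => g p.2) = fun p : Ω × ℝ => (fun _ : Ω => (1:ℝ)) p.1 * g p.2 := by
    funext p; ring
  rw [h, integral_prod_mul (fun _ : Ω => (1:ℝ)) g, integral_const]
  simp

lemma prod_tradeoff_zero {δ α : ℝ} (hδ : δ ∈ Icc (0:ℝ) 1) (hα : α ∈ Icc (0:ℝ) 1)
    (h : 1 - δ ≤ α) :
    tradeoff (P.prod (unif 0)) (Q.prod (unif δ)) α = 0 := by
  apply le_antisymm _ (tradeoff_nonneg hα.1)
  set g : ℝ → ℝ := (Ici (1-α)).indicator (fun _ => (1:ℝ)) with hg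
  have hgm : Measurable g := (measurable_indicator_const_iff 1).mpr measurableSet_Ici
  have hm : Measurable (fun p : Ω × ℝ => g p.2) := hgm.comp measurable_snd
  have hb : ∀ p : Ω × ℝ, g p.2 ∈ Icc (0:ℝ) 1 := fun p => indicator_mem_Icc _ _
  have hP : (∫ p : Ω × ℝ, g p.2 ∂(P.prod (unif 0))) = α := by
    rw [integral_snd_prod, hg, integral_indicator_unif 0 measurableSet_Ici, Ici_inter_Icc',
      max_eq_left (by linarith [hα.2]), Real.volume_Icc,
      ENNReal.toReal_ofReal (by linarith [hα.1])]
    ring_nf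
  have hQ : (∫ p : Ω × ℝ, g p.2 ∂(Q.prod (unif δ))) = 1 := by
    rw [integral_snd_prod, hg, integral_indicator_unif δ measurableSet_Ici, Ici_inter_Icc',
      max_eq_right (by linarith), Real.volume_Icc,
      ENNReal.toReal_ofReal (by linarith [hδ.1])]
    ring_nf
  have := tradeoff_le (P := P.prod (unif 0)) (Q := Q.prod (unif δ)) hm hb (le_of_eq hP)
  rw [hQ] at this
  simpa using this

end Main

section Main2

variable {Ω : Type*} [MeasurableSpace Ω] (P Q : Measure Ω)
  [IsProbabilityMeasure P] [IsProbabilityMeasure Q]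

lemma prod_tradeoff_upper {δ α : ℝ} (hδ : δ ∈ Icc (0:ℝ) 1) (hα : α ∈ Icc (0:ℝ) 1)
    (hδ1 : δ < 1) (h : α ≤ 1 - δ) :
    tradeoff (P.prod (unif 0)) (Q.prod (unif δ)) α ≤ (1 - δ) * tradeoff P Q (α / (1 - δ)) := by
  have hpos : (0:ℝ) < 1 - δ := by linarith
  rw [mul_comm, ← div_le_iff₀ hpos]
  refine le_tradeoff (div_nonneg hα.1 hpos.le) fun ψ hm hb hP => ?_
  rw [div_le_iff₀ hpos, sub_mul, one_mul]
  -- construct the product test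
  set g1 : ℝ → ℝ := (Icc δ 1).indicator (fun _ => (1:ℝ)) with hg1
  set g2 : ℝ → ℝ := (Ioi 1).indicator (fun _ => (1:ℝ)) with hg2
  have hg1m : Measurable g1 := (measurable_indicator_const_iff 1).mpr measurableSet_Icc
  have hg2m : Measurable g2 := (measurable_indicator_const_iff 1).mpr measurableSet_Ioi
  set φ : Ω × ℝ → ℝ := fun p => ψ p.1 * g1 p.2 + g2 p.2 with hφ
  have hφm : Measurable φ :=
    ((hm.comp measurable_fst).mul (hg1m.comp measurable_snd)).add (hg2m.comp measurable_snd)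
  have hφb : ∀ p : Ω × ℝ, φ p ∈ Icc (0:ℝ) 1 := by
    intro p
    by_cases h1 : p.2 ∈ Icc δ 1
    · have h2 : p.2 ∉ Ioi (1:ℝ) := fun hc => absurd h1.2 (not_le.mpr hc)
      simp only [hφ, hg1, hg2, Set.indicator_of_mem h1, Set.indicator_of_notMem h2]
      simpa using hb p.1
    · by_cases h2 : p.2 ∈ Ioi (1:ℝ)
      · simp [hφ, hg1, hg2, Set.indicator_of_notMem h1, Set.indicator_of_mem h2]
      · simp [hφ, hg1, hg2, Set.indicator_of_notMem h1, Set.indicator_of_notMem h2]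
  have hint1 : (∫ x, g1 x ∂(unif 0)) = 1 - δ := by
    rw [hg1, integral_indicator_unif 0 measurableSet_Icc]
    have : Icc δ 1 ∩ Icc (0:ℝ) (0+1) = Icc δ 1 :=
      inter_eq_left.mpr (by norm_num; exact Icc_subset_Icc hδ.1 le_rfl)
    rw [this, Real.volume_Icc, ENNReal.toReal_ofReal (by linarith)]
  have hint2 : (∫ x, g2 x ∂(unif 0)) = 0 := by
    rw [hg2, integral_indicator_unif 0 measurableSet_Ioi]
    have : Ioi (1:ℝ) ∩ Icc (0:ℝ) (0+1) = ∅ := by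
      ext x; simp only [mem_inter_iff, mem_Ioi, mem_Icc, mem_empty_iff_false, iff_false]
      rintro ⟨h1, _, h3⟩; linarith
    rw [this]; simp
  have hint3 : (∫ x, g1 x ∂(unif δ)) = 1 - δ := by
    rw [hg1, integral_indicator_unif δ measurableSet_Icc]
    have : Icc δ 1 ∩ Icc δ (δ+1) = Icc δ 1 :=
      inter_eq_left.mpr (Icc_subset_Icc le_rfl (by linarith [hδ.1]))
    rw [this, Real.volume_Icc, ENNReal.toReal_ofReal (by linarith)]
  have hint4 : (∫ x, g2 x ∂(unif δ)) = δ := by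
    rw [hg2, integral_indicator_unif δ measurableSet_Ioi]
    have : Ioi (1:ℝ) ∩ Icc δ (δ+1) = Ioc 1 (δ+1) := by
      ext x
      simp only [mem_inter_iff, mem_Ioi, mem_Icc, mem_Ioc]
      constructor
      · rintro ⟨h1, _, h3⟩; exact ⟨h1, h3⟩
      · rintro ⟨h1, h2⟩; exact ⟨h1, by linarith [hδ.2], h2⟩
    rw [this, Real.volume_Ioc, ENNReal.toReal_ofReal (by linarith [hδ.1])]
    ring
  -- integrability of the two pieces
  have hi1P : Integrable (fun p : Ω × ℝ => ψ p.1 * g1 p.2) (P.prod (unif 0)) :=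
    integrable_of_bdd ((hm.comp measurable_fst).mul (hg1m.comp measurable_snd)) (fun p => by
      have := hb p.1
      have := indicator_mem_Icc (Icc δ 1) p.2
      constructor
      · exact mul_nonneg (hb p.1).1 (this).1
      · calc ψ p.1 * g1 p.2 ≤ 1 * 1 :=
              mul_le_mul (hb p.1).2 this.2 this.1 zero_le_one
          _ = 1 := by ring)
  have hi2P : Integrable (fun p : Ω × ℝ => g2 p.2) (P.prod (unif 0)) :=
    integrable_of_bdd (hg2m.comp measurable_snd) (fun p => indicator_mem_Icc _ _)
  have hi1Q : Integrable (fun p : Ω × ℝ => ψ p.1 * g1 p.2) (Q.prod (unif δ)) :=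
    integrable_of_bdd ((hm.comp measurable_fst).mul (hg1m.comp measurable_snd)) (fun p => by
      have h2 := indicator_mem_Icc (Icc δ 1) p.2
      constructor
      · exact mul_nonneg (hb p.1).1 h2.1
      · calc ψ p.1 * g1 p.2 ≤ 1 * 1 := mul_le_mul (hb p.1).2 h2.2 h2.1 zero_le_one
          _ = 1 := by ring)
  have hi2Q : Integrable (fun p : Ω × ℝ => g2 p.2) (Q.prod (unif δ)) :=
    integrable_of_bdd (hg2m.comp measurable_snd) (fun p => indicator_mem_Icc _ _)
  have hPint : (∫ p, φ p ∂(P.prod (unif 0))) = (1 - δ) * ∫ ω, ψ ω ∂P := by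
    rw [hφ, integral_add hi1P hi2P, integral_prod_mul ψ g1, integral_snd_prod, hint1, hint2]
    ring
  have hQint : (∫ p, φ p ∂(Q.prod (unif δ))) = (1 - δ) * (∫ ω, ψ ω ∂Q) + δ := by
    rw [hφ, integral_add hi1Q hi2Q, integral_prod_mul ψ g1, integral_snd_prod, hint3, hint4]
    ring
  have hPle : (∫ p, φ p ∂(P.prod (unif 0))) ≤ α := by
    rw [hPint]
    calc (1 - δ) * ∫ ω, ψ ω ∂P ≤ (1 - δ) * (α / (1 - δ)) :=
          mul_le_mul_of_nonneg_left hP hpos.le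
      _ = α := by field_simp
  have := tradeoff_le (P := P.prod (unif 0)) (Q := Q.prod (unif δ)) hφm hφb hPle
  rw [hQint] at this
  linarith
end Main2

section Main3

variable {Ω : Type*} [MeasurableSpace Ω] (P Q : Measure Ω)
  [IsProbabilityMeasure P] [IsProbabilityMeasure Q]

lemma prod_tradeoff_lower {δ α : ℝ} (hδ : δ ∈ Icc (0:ℝ) 1) (hα : α ∈ Icc (0:ℝ) 1)
    (hδ1 : δ < 1) :
    (1 - δ) * tradeoff P Q (α / (1 - δ)) ≤
      tradeoff (P.prod (unif 0)) (Q.prod (unif δ)) α := by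
  have hpos : (0:ℝ) < 1 - δ := by linarith
  refine le_tradeoff hα.1 fun φ hm hb hP => ?_
  -- the derived test on Ω
  set I : Ω → ℝ := fun ω => ∫ x in Icc δ 1, φ (ω, x) with hI
  have hIm : Measurable I := by
    have := (hm.stronglyMeasurable.integral_prod_right'
      (ν := (volume : Measure ℝ).restrict (Icc δ 1)))
    exact this.measurable
  have hslicem : ∀ ω, Measurable (fun x => φ (ω, x)) :=
    fun ω => hm.comp measurable_prodMk_left
  have hIb : ∀ ω, I ω ∈ Icc (0:ℝ) (1 - δ) := by
    intro ω
    constructor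
    · exact integral_nonneg fun x => (hb (ω, x)).1
    · calc (∫ x in Icc δ 1, φ (ω, x)) ≤ (volume (Icc δ 1)).toReal :=
            setIntegral_le_vol (hslicem ω) (fun x => hb (ω, x))
              (by rw [Real.volume_Icc]; exact ENNReal.ofReal_lt_top)
        _ = 1 - δ := by rw [Real.volume_Icc, ENNReal.toReal_ofReal (by linarith)]
  set ψ : Ω → ℝ := fun ω => I ω / (1 - δ) with hψ
  have hψm : Measurable ψ := hIm.div_const _
  have hψb : ∀ ω, ψ ω ∈ Icc (0:ℝ) 1 := fun ω =>
    ⟨div_nonneg (hIb ω).1 hpos.le, (div_le_one hpos).mpr (hIb ω).2⟩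
  have hIbb : ∀ ω, I ω ∈ Icc (0:ℝ) 1 := fun ω => ⟨(hIb ω).1, le_trans (hIb ω).2 (by linarith [hδ.1])⟩
  have hIint : ∀ (μ : Measure Ω), IsProbabilityMeasure μ → Integrable I μ :=
    fun μ _ => integrable_of_bdd hIm hIbb
  -- the function ω ↦ ∫ φ(ω,·) d(unif a) is measurable and bounded
  have hinm : ∀ a : ℝ, Measurable (fun ω => ∫ x, φ (ω, x) ∂(unif a)) := by
    intro a
    exact (hm.stronglyMeasurable.integral_prod_right' (ν := unif a)).measurable
  have hinb : ∀ a : ℝ, ∀ ω, (∫ x, φ (ω, x) ∂(unif a)) ∈ Icc (0:ℝ) 1 := by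
    intro a ω
    exact ⟨integral_nonneg fun x => (hb (ω, x)).1, integral_le_one (hslicem ω) fun x => hb (ω, x)⟩
  -- Fubini
  have hφintP : Integrable φ (P.prod (unif 0)) := integrable_of_bdd hm hb
  have hφintQ : Integrable φ (Q.prod (unif δ)) := integrable_of_bdd hm hb
  have hfubP : (∫ p, φ p ∂(P.prod (unif 0))) = ∫ ω, (∫ x, φ (ω, x) ∂(unif 0)) ∂P :=
    integral_prod φ hφintP
  have hfubQ : (∫ p, φ p ∂(Q.prod (unif δ))) = ∫ ω, (∫ x, φ (ω, x) ∂(unif δ)) ∂Q :=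
    integral_prod φ hφintQ
  -- ∫ I dP ≤ α
  have hIP : (∫ ω, I ω ∂P) ≤ α := by
    calc (∫ ω, I ω ∂P) ≤ ∫ ω, (∫ x, φ (ω, x) ∂(unif 0)) ∂P := by
          refine integral_mono (hIint P inferInstance)
            (integrable_of_bdd (hinm 0) (hinb 0)) fun ω => ?_
          exact integral_Icc_le_unif_zero (hslicem ω) (fun x => hb (ω, x)) hδ
      _ = ∫ p, φ p ∂(P.prod (unif 0)) := hfubP.symm
      _ ≤ α := hP
  -- ∫ φ dQ' ≤ ∫ I dQ + δ
  have hIQ : (∫ p, φ p ∂(Q.prod (unif δ))) ≤ (∫ ω, I ω ∂Q) + δ := by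
    rw [hfubQ]
    calc (∫ ω, (∫ x, φ (ω, x) ∂(unif δ)) ∂Q) ≤ ∫ ω, (I ω + δ) ∂Q := by
          refine integral_mono (integrable_of_bdd (hinm δ) (hinb δ))
            ((hIint Q inferInstance).add (integrable_const δ)) fun ω => ?_
          exact integral_unif_split (hslicem ω) (fun x => hb (ω, x)) hδ
      _ = (∫ ω, I ω ∂Q) + δ := by
          rw [integral_add (hIint Q inferInstance) (integrable_const δ)]
          simp
  -- relate ψ integrals to I integrals
  have hψP : (∫ ω, ψ ω ∂P) ≤ α / (1 - δ) := by
    rw [hψ]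
    simp only [integral_div]
    exact div_le_div_of_nonneg_right hIP hpos.le |>.trans_eq rfl
  have hψQ : (∫ ω, ψ ω ∂Q) = (∫ ω, I ω ∂Q) / (1 - δ) := by
    rw [hψ]; simp [integral_div]
  have ht := tradeoff_le (P := P) (Q := Q) hψm hψb hψP
  -- conclude
  have hIQ' : (∫ ω, I ω ∂Q) = (1 - δ) * ∫ ω, ψ ω ∂Q := by
    rw [hψQ]; field_simp
  have : (1 - δ) * tradeoff P Q (α / (1 - δ)) ≤ (1 - δ) * (1 - ∫ ω, ψ ω ∂Q) :=
    mul_le_mul_of_nonneg_left ht hpos.le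
  have hfin : (1 - δ) * (1 - ∫ ω, ψ ω ∂Q) ≤ 1 - ∫ p, φ p ∂(Q.prod (unif δ)) := by
    have := hIQ
    rw [hIQ'] at this
    nlinarith [hδ.1]
  linarith

end Main3

lemma prod_tradeoff {Ω : Type*} [MeasurableSpace Ω] (P Q : Measure Ω)
    [IsProbabilityMeasure P] [IsProbabilityMeasure Q] {δ α : ℝ}
    (hδ : δ ∈ Icc (0:ℝ) 1) (hα : α ∈ Icc (0:ℝ) 1) :
    tradeoff (P.prod (unif 0)) (Q.prod (unif δ)) α =
      if α ≤ 1 - δ then (1 - δ) * tradeoff P Q (α / (1 - δ)) else 0 := by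
  by_cases hc : α ≤ 1 - δ
  · rw [if_pos hc]
    rcases eq_or_lt_of_le hδ.2 with h1 | h1
    · rw [prod_tradeoff_zero P Q hδ hα (by rw [← h1]; linarith [hα.1])]
      rw [← h1]; ring
    · exact le_antisymm (prod_tradeoff_upper P Q hδ hα h1 hc) (prod_tradeoff_lower P Q hδ hα h1)
  · rw [if_neg hc]
    exact prod_tradeoff_zero P Q hδ hα (le_of_lt (not_le.mp hc))

/-- Tensoring with `f_{0,δ} = T(U[0,1], U[δ,1+δ])`: for a trade-off function
`f = T(P,Q)`, one has `(f ⊗ f_{0,δ})(α) = T(P × U[0,1], Q × U[δ,1+δ])(α)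
= (1-δ)·f(α/(1-δ))` for `0 ≤ α ≤ 1-δ` and `0` for `1-δ ≤ α ≤ 1`; consequently
`f_{0,δ₁} ⊗ f_{0,δ₂} = f_{0, 1-(1-δ₁)(1-δ₂)}`. -/
theorem statement18 {Ω : Type*} [MeasurableSpace Ω] (P Q : Measure Ω)
    [IsProbabilityMeasure P] [IsProbabilityMeasure Q] (f : ℝ → ℝ) (δ : ℝ)
    (hδ : δ ∈ Icc (0:ℝ) 1) (hf : ∀ α ∈ Icc (0:ℝ) 1, f α = tradeoff P Q α) :
    (∀ α ∈ Icc (0:ℝ) 1,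
      tradeoff (P.prod (unif 0)) (Q.prod (unif δ)) α =
        if α ≤ 1 - δ then (1 - δ) * f (α / (1 - δ)) else 0) ∧
    (∀ δ₁ ∈ Icc (0:ℝ) 1, ∀ δ₂ ∈ Icc (0:ℝ) 1, ∀ α ∈ Icc (0:ℝ) 1,
      tradeoff ((unif 0).prod (unif 0)) ((unif δ₁).prod (unif δ₂)) α =
        max 0 ((1 - δ₁) * (1 - δ₂) - α)) := by
  constructor
  · intro α hα
    rw [prod_tradeoff P Q hδ hα]
    by_cases hc : α ≤ 1 - δ
    · rw [if_pos hc, if_pos hc]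
      rcases eq_or_lt_of_le hδ.2 with h1 | h1
      · rw [← h1]; ring
      · rw [hf _ ⟨div_nonneg hα.1 (by linarith), (div_le_one (by linarith)).mpr hc⟩]
    · rw [if_neg hc, if_neg hc]
  · intro δ₁ h1 δ₂ h2 α hα
    rw [prod_tradeoff (unif 0) (unif δ₁) h2 hα]
    by_cases hc : α ≤ 1 - δ₂
    · rw [if_pos hc]
      rcases eq_or_lt_of_le h2.2 with he | he
      · have hα0 : α = 0 := le_antisymm (by rw [← he] at hc; linarith) hα.1
        rw [he, hα0]
        simp
      · rw [tradeoff_unif h1 ⟨div_nonneg hα.1 (by linarith),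
          (div_le_one (by linarith)).mpr hc⟩]
        rw [mul_max_of_nonneg _ _ (by linarith : (0:ℝ) ≤ 1 - δ₂), mul_zero]
        have hne : (1:ℝ) - δ₂ ≠ 0 := ne_of_gt (by linarith)
        have : (1 - δ₂) * (1 - δ₁ - α / (1 - δ₂)) = (1 - δ₁) * (1 - δ₂) - α := by
          field_simp
        rw [this]
    · rw [if_neg hc]
      have hle : (1 - δ₁) * (1 - δ₂) - α ≤ 0 := by nlinarith [h1.1, h1.2, h2.1, h2.2]
      rw [max_eq_left hle]
end
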